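/- Let H ∈ (0,1) and a > 0, let K_H be the Volterra kernel of the Mandelbrot–Van Ness fractional Brownian motion (extended by 0 for s ≥ t), and assume there is a constant M > 0 such that ∫_0^1 (K_H(t,u) − K_H(s,u))² du ≤ M |t−s|^{2H} for all s,t ∈ [0,1], and that ∫_0^1 ∫_0^1 K_H(v,u)² du dv < ∞. For ε ∈ (0,1] define K^ε(t,s) = ε^H K_H(t,s) − a ε^{H+1} ∫_s^t e^{−aε(t−u)} K_H(u,s) du for 0 < s < t ≤ 1 (and 0 for s ≥ t). Then there exists a constant C > 0 such that for every ε ∈ (0,1] and all s,t ∈ [0,1], ∫_0^1 (K^ε(t,u) − K^ε(s,u))² du ≤ C ε^{2H} |t−s|^{min(2H,1)}. -/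

import Mathlib

open Real Filter Set MeasureTheory

/-- Normalizing constant of the Mandelbrot–Van Ness Volterra kernel. -/
noncomputable def cH (H : ℝ) : ℝ :=
  Real.sqrt (2 * H * Real.Gamma (3 / 2 - H) / (Real.Gamma (H + 1 / 2) * Real.Gamma (2 - 2 * H)))

/-- The Volterra kernel of the Mandelbrot–Van Ness fractional Brownian motion,
extended by `0` for `s ≥ t`. -/
noncomputable def KH (H t s : ℝ) : ℝ :=
  if s < t then
    cH H * ((t / s) ^ (H - 1 / 2) * (t - s) ^ (H - 1 / 2)
      - (H - 1 / 2) * s ^ (1 / 2 - H) * ∫ u in s..t, u ^ (H - 3 / 2) * (u - s) ^ (H - 1 / 2))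
  else 0

/-- The short-time rescaled kernel of the fractional Ornstein–Uhlenbeck process,
extended by `0` for `s ≥ t`. -/
noncomputable def KepsFOU (H a ε t s : ℝ) : ℝ :=
  if s < t then
    ε ^ H * KH H t s - a * ε ^ (H + 1) * ∫ u in s..t, Real.exp (-(a * ε * (t - u))) * KH H u s
  else 0

/-!
With `θ = a ε`, the fOU kernel is `K^ε(t,u) = ε^H (K_H(t,u) - θ D_t(u))`, where
`D_t(u) = ∫_{(u,t]} e^{-θ(t-v)} K_H(v,u) dv`. For `s ≤ t`, `D_t - D_s` is the integral over
`(s,t]`, which is `O(√(t-s))` by Cauchy–Schwarz, plus the integral over `(u,s]` of the weight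
difference `e^{-θ(t-v)} - e^{-θ(s-v)} = O(θ (t-s))`. Hence
`(D_t(u) - D_s(u))² ≤ 2 (1 + θ²) (t-s) ∫₀¹ K_H(v,u)² dv`, which is integrable in `u` by the `L²`
hypothesis, while the `K_H` increment is controlled by the Hölder hypothesis. Both `t - s` and
`(t-s)^{2H}` are at most `(t-s)^{min(2H,1)}`, and `θ ≤ a` makes the constant uniform in `ε`.
-/

section CauchySchwarz

open scoped ENNReal

variable {α : Type*} [MeasurableSpace α] {μ : Measure α}

theorem sq_integral_le_measureReal_mul_integral_sq [IsFiniteMeasure μ] {φ : α → ℝ}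
    (hφ : MemLp φ 2 μ) : (∫ x, φ x ∂μ) ^ 2 ≤ μ.real univ * ∫ x, φ x ^ 2 ∂μ := by
  rcases eq_zero_or_neZero μ with rfl | _
  · simp
  have hm : 0 < μ.real univ := by
    rw [measureReal_def]
    exact ENNReal.toReal_pos (NeZero.ne _) (measure_ne_top _ _)
  have hJensen := (even_two.convexOn_pow).map_average_le (continuous_pow 2).continuousOn
    isClosed_univ (ae_of_all _ fun _ => mem_univ _) (hφ.integrable one_le_two) hφ.integrable_sq
  simp only [average_eq, smul_eq_mul] at hJensen
  field_simp at hJensen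
  exact hJensen

theorem sq_setIntegral_mul_le {A S : Set α} {w k : α → ℝ} {b : ℝ} (hA : MeasurableSet A)
    (hAS : A ⊆ S) (hS : μ S ≠ ∞) (hw : AEStronglyMeasurable w (μ.restrict A))
    (hwb : ∀ x ∈ A, |w x| ≤ b) (hk : MemLp k 2 (μ.restrict S)) :
    (∫ x in A, w x * k x ∂μ) ^ 2 ≤ μ.real A * b ^ 2 * ∫ x in S, k x ^ 2 ∂μ := by
  have : IsFiniteMeasure (μ.restrict A) :=
    isFiniteMeasure_restrict.2 (measure_ne_top_of_subset hAS hS)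
  have hkA : MemLp k 2 (μ.restrict A) := hk.mono_measure (Measure.restrict_mono hAS le_rfl)
  have hwb' : ∀ᵐ x ∂μ.restrict A, |w x| ≤ b := ae_restrict_of_forall_mem hA hwb
  have hwk : MemLp (fun x => w x * k x) 2 (μ.restrict A) := by
    refine hkA.of_le_mul (c := b) (hw.mul hkA.1) ?_
    filter_upwards [hwb'] with x hx
    rw [norm_mul, Real.norm_eq_abs]
    exact mul_le_mul_of_nonneg_right hx (norm_nonneg _)
  calc (∫ x in A, w x * k x ∂μ) ^ 2 ≤ μ.real A * ∫ x in A, (w x * k x) ^ 2 ∂μ := by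
        simpa only [measureReal_restrict_apply_univ] using
          sq_integral_le_measureReal_mul_integral_sq hwk
    _ ≤ μ.real A * ∫ x in A, b ^ 2 * k x ^ 2 ∂μ := by
        refine mul_le_mul_of_nonneg_left (integral_mono_ae hwk.integrable_sq
          (hkA.integrable_sq.const_mul _) ?_) measureReal_nonneg
        filter_upwards [hwb'] with x hx
        rw [mul_pow]
        exact mul_le_mul_of_nonneg_right (sq_le_sq' (abs_le.1 hx).1 (abs_le.1 hx).2) (sq_nonneg _)
    _ ≤ μ.real A * b ^ 2 * ∫ x in S, k x ^ 2 ∂μ := by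
        rw [integral_const_mul, mul_assoc]
        gcongr
        · exact ae_of_all _ fun x => sq_nonneg _
        · exact hk.integrable_sq

end CauchySchwarz

theorem abs_exp_neg_sub_exp_neg_le {x y : ℝ} (hx : 0 ≤ x) (hxy : x ≤ y) :
    |exp (-y) - exp (-x)| ≤ y - x := by
  have hexp : exp (-y) = exp (-x) * exp (-(y - x)) := by rw [← exp_add]; ring_nf
  have h1 : exp (-x) ≤ 1 := exp_le_one_iff.2 (by linarith)
  have h2 : 1 - (y - x) ≤ exp (-(y - x)) := by linarith [add_one_le_exp (-(y - x))]
  have h3 : exp (-(y - x)) ≤ 1 := exp_le_one_iff.2 (by linarith)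
  rw [abs_of_nonpos (by nlinarith [exp_pos (-x)]), hexp]
  nlinarith [exp_pos (-x)]

noncomputable def dampedIntegral (θ : ℝ) (k : ℝ → ℝ) (u r : ℝ) : ℝ :=
  ∫ v in Ioc u r, exp (-(θ * (r - v))) * k v

section DampedIntegral

variable {θ u s t : ℝ} {k : ℝ → ℝ}

theorem dampedIntegral_sub_eq (hk : IntegrableOn k (Icc 0 1)) (hu : 0 ≤ u) (hst : s ≤ t)
    (ht : t ≤ 1) :
    dampedIntegral θ k u t - dampedIntegral θ k u s
      = (∫ v in Ioc (max u s) t, exp (-(θ * (t - v))) * k v)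
        + ∫ v in Ioc u s, (exp (-(θ * (t - v))) - exp (-(θ * (s - v)))) * k v := by
  rcases le_total s u with hsu | hus
  · simp [dampedIntegral, max_eq_left hsu, Ioc_eq_empty (not_lt.2 hsu)]
  have hint : ∀ r, IntegrableOn (fun v => exp (-(θ * (r - v))) * k v) (Ioc u t) := fun r =>
    (hk.continuousOn_mul (by fun_prop) isCompact_Icc).mono_set
      fun v hv => ⟨hu.trans hv.1.le, hv.2.trans ht⟩
  have hsplit : Ioc u t = Ioc u s ∪ Ioc s t := (Ioc_union_Ioc_eq_Ioc hus hst).symm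
  rw [dampedIntegral, dampedIntegral, max_eq_right hus, hsplit,
    setIntegral_union (Ioc_disjoint_Ioc_of_le le_rfl) measurableSet_Ioc
      ((hint t).mono_set (hsplit ▸ subset_union_left))
      ((hint t).mono_set (hsplit ▸ subset_union_right))]
  simp_rw [sub_mul]
  rw [integral_sub ((hint t).mono_set (hsplit ▸ subset_union_left))
      ((hint s).mono_set (hsplit ▸ subset_union_left))]
  ring

theorem sq_dampedIntegral_sub_le (hθ : 0 ≤ θ) (hk : MemLp k 2 (volume.restrict (Icc 0 1)))
    (hu : 0 ≤ u) (hs : 0 ≤ s) (hst : s ≤ t) (ht : t ≤ 1) :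
    (dampedIntegral θ k u t - dampedIntegral θ k u s) ^ 2
      ≤ 2 * (1 + θ ^ 2) * (t - s) * ∫ v in Icc 0 1, k v ^ 2 := by
  rw [dampedIntegral_sub_eq (hk.integrable one_le_two) hu hst ht]
  set E := ∫ v in Icc (0 : ℝ) 1, k v ^ 2
  have hE : 0 ≤ E := setIntegral_nonneg measurableSet_Icc fun v _ => sq_nonneg _
  have hIcc : volume (Icc (0 : ℝ) 1) ≠ ⊤ := by simp
  have hnear : (∫ v in Ioc (max u s) t, exp (-(θ * (t - v))) * k v) ^ 2 ≤ (t - s) * E := by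
    have hsub : Ioc (max u s) t ⊆ Icc 0 1 :=
      fun v hv => ⟨hu.trans ((le_max_left u s).trans hv.1.le), hv.2.trans ht⟩
    refine (sq_setIntegral_mul_le (b := 1) measurableSet_Ioc hsub hIcc
      (by fun_prop) (fun v hv => ?_) hk).trans ?_
    · rw [abs_of_pos (exp_pos _)]
      exact exp_le_one_iff.2 (neg_nonpos.2 (mul_nonneg hθ (by linarith [hv.2])))
    · rw [one_pow, mul_one]
      gcongr
      calc volume.real (Ioc (max u s) t) ≤ volume.real (Ioc s t) :=
            measureReal_mono (Ioc_subset_Ioc_left (le_max_right u s)) measure_Ioc_lt_top.ne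
        _ = t - s := volume_real_Ioc_of_le hst
  have hfar : (∫ v in Ioc u s,
      (exp (-(θ * (t - v))) - exp (-(θ * (s - v)))) * k v) ^ 2 ≤ θ ^ 2 * (t - s) * E := by
    have hsub : Ioc u s ⊆ Icc 0 1 := fun v hv => ⟨hu.trans hv.1.le, hv.2.trans (hst.trans ht)⟩
    refine (sq_setIntegral_mul_le (b := θ * (t - s)) measurableSet_Ioc hsub hIcc
      (by fun_prop) (fun v hv => ?_) hk).trans ?_
    · have := abs_exp_neg_sub_exp_neg_le (mul_nonneg hθ (sub_nonneg.2 hv.2))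
        (mul_le_mul_of_nonneg_left (sub_le_sub_right hst v) hθ)
      linarith
    · have hvol : volume.real (Ioc u s) ≤ 1 := by
        calc volume.real (Ioc u s) ≤ volume.real (Icc (0 : ℝ) 1) :=
              measureReal_mono hsub hIcc
          _ = 1 := by simp
      have hts : (t - s) ^ 2 ≤ t - s := by nlinarith
      calc volume.real (Ioc u s) * (θ * (t - s)) ^ 2 * E ≤ 1 * (θ ^ 2 * (t - s)) * E := by
            rw [mul_pow]
            gcongr
        _ = θ ^ 2 * (t - s) * E := by ring
  nlinarith [sq_nonneg ((∫ v in Ioc (max u s) t, exp (-(θ * (t - v))) * k v)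
    - ∫ v in Ioc u s, (exp (-(θ * (t - v))) - exp (-(θ * (s - v)))) * k v)]

end DampedIntegral

theorem measurable_setIntegral_Ioc {α : Type*} [MeasurableSpace α] {f : α → ℝ → ℝ}
    (hf : Measurable (Function.uncurry f)) {a b : α → ℝ} (ha : Measurable a)
    (hb : Measurable b) : Measurable fun x => ∫ y in Ioc (a x) (b x), f x y := by
  have hind : Measurable fun q : α × ℝ => (Ioc (a q.1) (b q.1)).indicator (f q.1) q.2 := by
    simp only [indicator_apply]
    exact Measurable.ite ((measurableSet_lt (ha.comp measurable_fst) measurable_snd).inter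
      (measurableSet_le measurable_snd (hb.comp measurable_fst))) hf measurable_const
  simpa only [integral_indicator measurableSet_Ioc] using
    (hind.stronglyMeasurable.integral_prod_right' (ν := volume)).measurable

theorem measurable_intervalIntegral {α : Type*} [MeasurableSpace α] {f : α → ℝ → ℝ}
    (hf : Measurable (Function.uncurry f)) {a b : α → ℝ} (ha : Measurable a)
    (hb : Measurable b) : Measurable fun x => ∫ y in a x..b x, f x y :=
  (measurable_setIntegral_Ioc hf ha hb).sub (measurable_setIntegral_Ioc hf hb ha)

theorem measurable_KH (H : ℝ) : Measurable fun p : ℝ × ℝ => KH H p.1 p.2 := by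
  have hint : Measurable fun p : ℝ × ℝ =>
      ∫ u in p.2..p.1, u ^ (H - 3 / 2) * (u - p.2) ^ (H - 1 / 2) :=
    measurable_intervalIntegral (by fun_prop) measurable_snd measurable_fst
  unfold KH
  exact Measurable.ite (measurableSet_lt measurable_snd measurable_fst) (by fun_prop)
    measurable_const

theorem integral_sq_sub_le {α : Type*} [MeasurableSpace α] {μ : Measure α} {g h G : α → ℝ}
    (hg : AEStronglyMeasurable g μ) (hG : Integrable G μ) (hhG : ∀ᵐ x ∂μ, h x ^ 2 ≤ G x) :
    ∫ x, (g x - h x) ^ 2 ∂μ ≤ 2 * ∫ x, g x ^ 2 ∂μ + 2 * ∫ x, G x ∂μ := by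
  have hG0 : 0 ≤ ∫ x, G x ∂μ :=
    integral_nonneg_of_ae (hhG.mono fun x hx => (sq_nonneg _).trans hx)
  by_cases hgh : Integrable (fun x => (g x - h x) ^ 2) μ
  swap
  · have hg0 : 0 ≤ ∫ x, g x ^ 2 ∂μ := integral_nonneg fun x => sq_nonneg _
    rw [integral_undef hgh]
    positivity
  have hg2 : Integrable (fun x => g x ^ 2) μ := by
    refine ((hgh.const_mul 2).add (hG.const_mul 2)).mono' (hg.pow 2) ?_
    filter_upwards [hhG] with x hx
    rw [Real.norm_eq_abs, abs_of_nonneg (sq_nonneg _), Pi.add_apply]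
    nlinarith [sq_nonneg (g x - 2 * h x)]
  rw [← integral_const_mul, ← integral_const_mul,
    ← integral_add (hg2.const_mul 2) (hG.const_mul 2)]
  refine integral_mono_ae hgh ((hg2.const_mul 2).add (hG.const_mul 2)) ?_
  filter_upwards [hhG] with x hx
  nlinarith [sq_nonneg (g x + h x)]

theorem KepsFOU_eq_sub_dampedIntegral (H a ε t u : ℝ) :
    KepsFOU H a ε t u
      = ε ^ H * KH H t u - a * ε ^ (H + 1) * dampedIntegral (a * ε) (fun v => KH H v u) u t := by
  unfold KepsFOU dampedIntegral
  split_ifs with hut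
  · rw [intervalIntegral.integral_of_le hut.le]
  · simp [KH, hut]

theorem KH_column_memLp_and_integrable {H : ℝ}
    (hL2 : IntegrableOn (fun vu : ℝ × ℝ => (KH H vu.1 vu.2) ^ 2)
      (Set.Icc 0 1 ×ˢ Set.Icc 0 1) (volume.prod volume)) :
    (∀ᵐ u ∂volume.restrict (Icc 0 1), MemLp (fun v => KH H v u) 2 (volume.restrict (Icc 0 1)))
      ∧ IntegrableOn (fun u => ∫ v in Icc 0 1, KH H v u ^ 2) (Icc 0 1) := by
  rw [IntegrableOn, ← Measure.prod_restrict] at hL2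
  refine ⟨?_, hL2.integral_prod_right⟩
  filter_upwards [hL2.prod_left_ae] with u hu
  exact (memLp_two_iff_integrable_sq
    ((measurable_KH H).comp (measurable_id.prodMk measurable_const)).aestronglyMeasurable).2 hu

theorem integral_sq_KepsFOU_sub_le {H a ε s t : ℝ} (ha : 0 < a) (hε : ε ∈ Ioc (0 : ℝ) 1)
    (hs : 0 ≤ s) (hst : s ≤ t) (ht : t ≤ 1)
    (hcol : ∀ᵐ u ∂volume.restrict (Ioc 0 1),
      MemLp (fun v => KH H v u) 2 (volume.restrict (Icc 0 1)))
    (hF : IntegrableOn (fun u => ∫ v in Icc 0 1, KH H v u ^ 2) (Ioc 0 1)) :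
    ∫ u in Ioc 0 1, (KepsFOU H a ε t u - KepsFOU H a ε s u) ^ 2
      ≤ (ε ^ H) ^ 2 * (2 * (∫ u in Ioc 0 1, (KH H t u - KH H s u) ^ 2)
        + 4 * a ^ 2 * (1 + a ^ 2) * (t - s) * ∫ u in Ioc 0 1, ∫ v in Icc 0 1, KH H v u ^ 2) := by
  set θ := a * ε
  set D := fun u => dampedIntegral θ (fun v => KH H v u) u t
    - dampedIntegral θ (fun v => KH H v u) u s
  have hθ : 0 ≤ θ := mul_nonneg ha.le hε.1.le
  have hθa : θ ^ 2 ≤ a ^ 2 := by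
    have : θ ≤ a := mul_le_of_le_one_right ha.le hε.2
    gcongr
  have hdiff : ∀ u, KepsFOU H a ε t u - KepsFOU H a ε s u
      = ε ^ H * (KH H t u - KH H s u) - ε ^ H * θ * D u := by
    intro u
    rw [KepsFOU_eq_sub_dampedIntegral, KepsFOU_eq_sub_dampedIntegral, rpow_add_one hε.1.ne']
    ring
  have hbound := integral_sq_sub_le (μ := volume.restrict (Ioc 0 1))
    (g := fun u => ε ^ H * (KH H t u - KH H s u)) (h := fun u => ε ^ H * θ * D u)
    (G := fun u => (ε ^ H) ^ 2 * (2 * a ^ 2 * (1 + a ^ 2) * (t - s))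
      * ∫ v in Icc 0 1, KH H v u ^ 2)
    (by
      have := measurable_KH H
      fun_prop)
    (hF.const_mul _) ?_
  · have e1 : ∫ u in Ioc 0 1, (ε ^ H * (KH H t u - KH H s u)) ^ 2
        = (ε ^ H) ^ 2 * ∫ u in Ioc 0 1, (KH H t u - KH H s u) ^ 2 := by
      simp_rw [mul_pow]
      exact integral_const_mul _ _
    rw [integral_const_mul, e1] at hbound
    simp only [hdiff]
    exact hbound.trans_eq (by ring)
  filter_upwards [hcol, ae_restrict_mem measurableSet_Ioc] with u hu hu01
  have hD := sq_dampedIntegral_sub_le hθ hu hu01.1.le hs hst ht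
  have hD' : D u ^ 2 ≤ 2 * (1 + a ^ 2) * (t - s) * ∫ v in Icc 0 1, KH H v u ^ 2 :=
    hD.trans (by gcongr)
  calc (ε ^ H * θ * D u) ^ 2 = (ε ^ H) ^ 2 * (θ ^ 2 * D u ^ 2) := by ring
    _ ≤ (ε ^ H) ^ 2 * (a ^ 2 * (2 * (1 + a ^ 2) * (t - s) * ∫ v in Icc 0 1, KH H v u ^ 2)) := by
        gcongr
    _ = _ := by ring

theorem integral_sq_KepsFOU_sub_le_rpow {H a ε s t M : ℝ} (ha : 0 < a)
    (hε : ε ∈ Ioc (0 : ℝ) 1) (hs : 0 ≤ s) (hst : s ≤ t) (ht : t ≤ 1) (hM : 0 ≤ M)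
    (hKH : ∫ u in (0:ℝ)..1, (KH H t u - KH H s u) ^ 2 ≤ M * |t - s| ^ (2 * H))
    (hcol : ∀ᵐ u ∂volume.restrict (Ioc 0 1),
      MemLp (fun v => KH H v u) 2 (volume.restrict (Icc 0 1)))
    (hF : IntegrableOn (fun u => ∫ v in Icc 0 1, KH H v u ^ 2) (Ioc 0 1)) :
    ∫ u in (0:ℝ)..1, (KepsFOU H a ε t u - KepsFOU H a ε s u) ^ 2
      ≤ (2 * M + 4 * a ^ 2 * (1 + a ^ 2) * (∫ u in Ioc 0 1, ∫ v in Icc 0 1, KH H v u ^ 2) + 1)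
        * ε ^ (2 * H) * |t - s| ^ min (2 * H) 1 := by
  set L := ∫ u in Ioc 0 1, ∫ v in Icc 0 1, KH H v u ^ 2
  have hL : 0 ≤ L := setIntegral_nonneg measurableSet_Ioc fun u _ =>
    setIntegral_nonneg measurableSet_Icc fun v _ => sq_nonneg _
  rcases hst.eq_or_lt with rfl | hlt
  · simp only [sub_self, zero_pow two_ne_zero, intervalIntegral.integral_zero]
    have := hε.1
    positivity
  have hts : 0 < t - s := sub_pos.2 hlt
  have hts1 : t - s ≤ 1 := by linarith
  rw [intervalIntegral.integral_of_le zero_le_one, abs_of_pos hts] at hKH ⊢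
  have h2H : (t - s) ^ (2 * H) ≤ (t - s) ^ min (2 * H) 1 :=
    rpow_le_rpow_of_exponent_ge hts hts1 (min_le_left _ _)
  have h1 : t - s ≤ (t - s) ^ min (2 * H) 1 := by
    simpa using rpow_le_rpow_of_exponent_ge hts hts1 (min_le_right (2 * H) 1)
  calc _ ≤ (ε ^ H) ^ 2 * (2 * (∫ u in Ioc 0 1, (KH H t u - KH H s u) ^ 2)
        + 4 * a ^ 2 * (1 + a ^ 2) * (t - s) * L) :=
        integral_sq_KepsFOU_sub_le ha hε hs hst ht hcol hF
    _ ≤ (ε ^ H) ^ 2 * ((2 * M + 4 * a ^ 2 * (1 + a ^ 2) * L + 1) * (t - s) ^ min (2 * H) 1) := by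
        gcongr
        have : 0 ≤ 4 * a ^ 2 * (1 + a ^ 2) * L := by positivity
        nlinarith [mul_le_mul_of_nonneg_left h2H hM, mul_le_mul_of_nonneg_left h1 this,
          rpow_nonneg hts.le (min (2 * H) 1)]
    _ = _ := by
        rw [← rpow_natCast, ← rpow_mul hε.1.le]
        ring_nf

theorem stmt_9_general (H a : ℝ) (ha : 0 < a)
    (M : ℝ)
    (hHolder : ∀ s ∈ Set.Icc (0:ℝ) 1, ∀ t ∈ Set.Icc (0:ℝ) 1,
      (∫ u in (0:ℝ)..1, (KH H t u - KH H s u) ^ 2) ≤ M * |t - s| ^ (2 * H))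
    (hL2 : IntegrableOn (fun vu : ℝ × ℝ => (KH H vu.1 vu.2) ^ 2)
      (Set.Icc 0 1 ×ˢ Set.Icc 0 1) (volume.prod volume)) :
    ∃ C > 0, ∀ ε ∈ Set.Ioc (0:ℝ) 1, ∀ s ∈ Set.Icc (0:ℝ) 1, ∀ t ∈ Set.Icc (0:ℝ) 1,
      (∫ u in (0:ℝ)..1, (KepsFOU H a ε t u - KepsFOU H a ε s u) ^ 2)
        ≤ C * ε ^ (2 * H) * |t - s| ^ (min (2 * H) 1) := by
  obtain ⟨hcol, hF⟩ := KH_column_memLp_and_integrable hL2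
  set L := ∫ u in Ioc 0 1, ∫ v in Icc 0 1, KH H v u ^ 2
  have hL : 0 ≤ L := setIntegral_nonneg measurableSet_Ioc fun u _ =>
    setIntegral_nonneg measurableSet_Icc fun v _ => sq_nonneg _
  have hM : 0 ≤ M := by
    have h01 := hHolder 0 (by simp) 1 (by simp)
    have : 0 ≤ ∫ u in (0 : ℝ)..1, (KH H 1 u - KH H 0 u) ^ 2 :=
      intervalIntegral.integral_nonneg zero_le_one fun _ _ => sq_nonneg _
    norm_num at h01
    linarith
  refine ⟨2 * M + 4 * a ^ 2 * (1 + a ^ 2) * L + 1, by positivity, fun ε hε s hs t ht => ?_⟩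
  wlog hst : s ≤ t generalizing s t
  · simpa only [abs_sub_comm, sub_sq_comm] using this t ht s hs (le_of_not_ge hst)
  exact integral_sq_KepsFOU_sub_le_rpow ha hε hs.1 hst ht.2 hM (hHolder s hs t ht)
    (ae_restrict_of_ae_restrict_of_subset Ioc_subset_Icc_self hcol)
    (hF.mono_set Ioc_subset_Icc_self)

/-- Condition (K2) for fOU-driven volatility: assuming the Hölder-type `L²`
increment bound for `K_H` and square integrability of `K_H` on `[0,1]²`, the
rescaled fOU kernels satisfy a uniform Hölder-type `L²` increment bound at the
small-noise scale `ε^H` with exponent `min(2H,1)`. -/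
theorem stmt_9 (H a : ℝ) (hH : H ∈ Set.Ioo (0:ℝ) 1) (ha : 0 < a)
    (M : ℝ) (hM : 0 < M)
    (hHolder : ∀ s ∈ Set.Icc (0:ℝ) 1, ∀ t ∈ Set.Icc (0:ℝ) 1,
      (∫ u in (0:ℝ)..1, (KH H t u - KH H s u) ^ 2) ≤ M * |t - s| ^ (2 * H))
    (hL2 : IntegrableOn (fun vu : ℝ × ℝ => (KH H vu.1 vu.2) ^ 2)
      (Set.Icc 0 1 ×ˢ Set.Icc 0 1) (volume.prod volume)) :
    ∃ C > 0, ∀ ε ∈ Set.Ioc (0:ℝ) 1, ∀ s ∈ Set.Icc (0:ℝ) 1, ∀ t ∈ Set.Icc (0:ℝ) 1,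
      (∫ u in (0:ℝ)..1, (KepsFOU H a ε t u - KepsFOU H a ε s u) ^ 2)
        ≤ C * ε ^ (2 * H) * |t - s| ^ (min (2 * H) 1) :=
  stmt_9_general H a ha M hHolder hL2
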